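/- arXiv:2410.18024 — 2 statements merged into one kernel-verified Lean document; each statement's English description precedes it below -/
import Mathlib

section
/- The functor F : Process_n → Id/Z̄₂[−]ⁿ sending (E, B, {l_i}) to (B, ∏_{i=1}^n l_i, E) and (α, β) to (β, α) is fully faithful. -/
open Classical CategoryTheory

noncomputable section

/-- A process network with `n` legs: a set `E` of entities, a set `B` of process
species, and `n` legs `B → Z̄₂[E]`, where the free commutative monoid `Z̄₂[E]` on `E`
with coefficients in the idempotent monoid Z̄₂ = ({0,1}, max, 0) is identified with
`Finset E` (support sets) under union. -/
structure PN (n : ℕ) : Type 1 where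
  E : Type
  B : Type
  legs : Fin n → B → Finset E

/-- A morphism of process networks: `l'_i ∘ β = Z̄₂[α] ∘ l_i`, where `Z̄₂[α]` is the
monoid hom extending `α`, i.e. `Finset.image α`. -/
@[ext]
structure PNHom {n : ℕ} (X Y : PN n) where
  α : X.E → Y.E
  β : X.B → Y.B
  comm : ∀ (i : Fin n) (b : X.B), Y.legs i (β b) = (X.legs i b).image α

instance (n : ℕ) : Category (PN n) where
  Hom := PNHom
  id X := ⟨id, id, by intro i b; simp⟩
  comp f g := ⟨g.α ∘ f.α, g.β ∘ f.β, by
    intro i b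
    rw [show (g.β ∘ f.β) b = g.β (f.β b) from rfl, g.comm, f.comm, Finset.image_image]⟩
  id_comp f := rfl
  comp_id f := rfl
  assoc f g h := rfl


/-- The functor `Z̄₂[−]ⁿ : Set → Set`, sending `E` to `(Z̄₂[E])ⁿ` and `α` to `(Z̄₂[α])ⁿ`. -/
def Zn (n : ℕ) : Type ⥤ Type where
  obj E := Fin n → Finset E
  map α := TypeCat.ofHom fun v => fun i => (v i).image α
  map_id E := by
    apply ConcreteCategory.hom_ext
    intro v
    funext i
    exact Finset.image_id
  map_comp f g := by
    apply ConcreteCategory.hom_ext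
    intro v
    funext i
    exact (Finset.image_image (f := ⇑f) (g := ⇑g)).symm

/-- The comparison functor `F : Process_n → Id/Z̄₂[−]ⁿ`, sending `(E, B, {l_i})` to
`(B, ∏ l_i, E)` and `(α, β)` to `(β, α)`. -/
def Fcomma (n : ℕ) : PN n ⥤ Comma (𝟭 Type) (Zn n) where
  obj X := { left := X.B, right := X.E, hom := TypeCat.ofHom fun b i => X.legs i b }
  map {X Y} f :=
    { left := TypeCat.ofHom f.β
      right := TypeCat.ofHom f.α
      w := by
        apply ConcreteCategory.hom_ext
        intro b
        funext i
        exact f.comm i b }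
  map_id X := rfl
  map_comp f g := rfl

/-- The square of a comma morphism `F X ⟶ F Y`, evaluated at a species `b` and a leg `i`,
is the compatibility condition of a morphism of process networks. -/
def Fcomma.preimage {n : ℕ} {X Y : PN n} (g : (Fcomma n).obj X ⟶ (Fcomma n).obj Y) : X ⟶ Y where
  α := g.right
  β := g.left
  comm i b := congrFun (ConcreteCategory.congr_hom g.w b) i

-- Both round trips are definitional: `F` only repackages `(α, β)` as `(β, α)`.
def Fcomma.fullyFaithful (n : ℕ) : (Fcomma n).FullyFaithful where
  preimage := Fcomma.preimage
  map_preimage _ := rfl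
  preimage_map _ := rfl

/-- The functor `F : Process_n → Id/Z̄₂[−]ⁿ`, `(E,B,{l_i}) ↦ (B, ∏ l_i, E)`,
`(α,β) ↦ (β,α)`, is fully faithful. -/
theorem Fcomma_full_and_faithful (n : ℕ) :
    (Fcomma n).Full ∧ (Fcomma n).Faithful :=
  ⟨(Fcomma.fullyFaithful n).full, (Fcomma.fullyFaithful n).faithful⟩

end
end

section
/- Given process networks B₁ = (E₁, B₁, {l_{i,1}}) and B₂ = (E₂, B₂, {l_{i,2}}) with n legs and morphisms O₁ : L(Y) → B₁ and I₂ : L(Y) → B₂ in Process_n (where L : Set → Process_n is the functor with empty process species, so O₁ and I₂ are determined by functions O₁, I₂ : Y → E₁, Y → E₂), the process network (E, B, {l_i}) with E := E₁ +_{O₁,Y,I₂} E₂ (the pushout of sets), B := B₁ ⊔ B₂, and l_i defined on (b₁, inl) as Z̄₂[j₁](l_{i,1}(b₁)) and on (b₂, inr) as Z̄₂[j₂](l_{i,2}(b₂)) (where j₁ : E₁ → E, j₂ : E₂ → E are the canonical maps to the pushout), together with the evident morphisms from B₁ and B₂, is a pushout of the cospan B₁ ← L(Y) → B₂ in Process_n.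 -/
open Classical CategoryTheory

noncomputable section

/-- `L` on objects: the process network with entity set `E` and no process species. -/
def Lobj (n : ℕ) (E : Type) : PN n :=
  { E := E, B := PEmpty, legs := fun _ b => b.elim }

/-- A morphism `L(Y) → 𝓑` in `Process_n` determined by a function `Y → E`. -/
def homL {n : ℕ} {Y : Type} {X : PN n} (f : Y → X.E) : Lobj n Y ⟶ X :=
  ⟨f, fun b => b.elim, fun _ b => b.elim⟩

section PushoutConstruction

variable {n : ℕ} (X₁ X₂ : PN n) (Y : Type) (O₁ : Y → X₁.E) (I₂ : Y → X₂.E)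

/-- The span relation on `E₁ ⊔ E₂` whose quotient is the pushout of sets
`E₁ +_{O₁,Y,I₂} E₂`. -/
def pushRel : (X₁.E ⊕ X₂.E) → (X₁.E ⊕ X₂.E) → Prop :=
  fun x y => ∃ t : Y, x = Sum.inl (O₁ t) ∧ y = Sum.inr (I₂ t)

/-- The pushout of entity sets `E := E₁ +_{O₁,Y,I₂} E₂`. -/
def pushE : Type := Quot (pushRel X₁ X₂ Y O₁ I₂)

/-- Canonical map `j₁ : E₁ → E`. -/
def j₁ : X₁.E → pushE X₁ X₂ Y O₁ I₂ := fun e => Quot.mk _ (Sum.inl e)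

/-- Canonical map `j₂ : E₂ → E`. -/
def j₂ : X₂.E → pushE X₁ X₂ Y O₁ I₂ := fun e => Quot.mk _ (Sum.inr e)

/-- The pushout process network `(E₁ +_Y E₂, B₁ ⊔ B₂, {l_i})` with
`l_i(b₁) = Z̄₂[j₁](l_{i,1}(b₁))` and `l_i(b₂) = Z̄₂[j₂](l_{i,2}(b₂))`. -/
def pushPN : PN n :=
  { E := pushE X₁ X₂ Y O₁ I₂
    B := X₁.B ⊕ X₂.B
    legs := fun i =>
      Sum.elim (fun b₁ => (X₁.legs i b₁).image (j₁ X₁ X₂ Y O₁ I₂))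
        (fun b₂ => (X₂.legs i b₂).image (j₂ X₁ X₂ Y O₁ I₂)) }

/-- The evident morphism `𝓑₁ → 𝓑₁ +_{L(Y)} 𝓑₂`. -/
def ι₁ : X₁ ⟶ pushPN X₁ X₂ Y O₁ I₂ :=
  ⟨j₁ X₁ X₂ Y O₁ I₂, Sum.inl, fun _ _ => rfl⟩

/-- The evident morphism `𝓑₂ → 𝓑₁ +_{L(Y)} 𝓑₂`. -/
def ι₂ : X₂ ⟶ pushPN X₁ X₂ Y O₁ I₂ :=
  ⟨j₂ X₁ X₂ Y O₁ I₂, Sum.inr, fun _ _ => rfl⟩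

/-! Since `L(Y)` has no process species, a cocone under `B₁ ← L(Y) → B₂` is a pair of
morphisms whose entity maps agree on `Y` and whose species maps are unconstrained. Hence the
pushout is computed componentwise: entities as the pushout of sets, species as the disjoint
union; the leg condition of the induced morphism is functoriality of `Finset.image`. -/

lemma Lobj_hom_ext {E : Type} {X : PN n} {f g : Lobj n E ⟶ X} (h : f.α = g.α) : f = g :=
  PNHom.ext h (funext fun b => b.elim)

lemma pushPN_condition : homL O₁ ≫ ι₁ X₁ X₂ Y O₁ I₂ = homL I₂ ≫ ι₂ X₁ X₂ Y O₁ I₂ :=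
  Lobj_hom_ext (funext fun t => Quot.sound ⟨t, rfl, rfl⟩)

variable {X₁ X₂ Y O₁ I₂}

def pushE.lift {T : Type} (g₁ : X₁.E → T) (g₂ : X₂.E → T) (h : g₁ ∘ O₁ = g₂ ∘ I₂) :
    pushE X₁ X₂ Y O₁ I₂ → T :=
  Quot.lift (Sum.elim g₁ g₂) fun _ _ ⟨t, h₁, h₂⟩ => by
    subst h₁ h₂
    exact congrFun h t

lemma pushE.lift_comp_j₁ {T : Type} (g₁ : X₁.E → T) (g₂ : X₂.E → T) (h : g₁ ∘ O₁ = g₂ ∘ I₂) :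
    pushE.lift g₁ g₂ h ∘ j₁ X₁ X₂ Y O₁ I₂ = g₁ :=
  rfl

lemma pushE.lift_comp_j₂ {T : Type} (g₁ : X₁.E → T) (g₂ : X₂.E → T) (h : g₁ ∘ O₁ = g₂ ∘ I₂) :
    pushE.lift g₁ g₂ h ∘ j₂ X₁ X₂ Y O₁ I₂ = g₂ :=
  rfl

def pushDesc {Z : PN n} (f₁ : X₁ ⟶ Z) (f₂ : X₂ ⟶ Z) (h : f₁.α ∘ O₁ = f₂.α ∘ I₂) :
    pushPN X₁ X₂ Y O₁ I₂ ⟶ Z where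
  α := pushE.lift f₁.α f₂.α h
  β := Sum.elim f₁.β f₂.β
  comm := by
    rintro i (b | b)
    · rw [Sum.elim_inl, f₁.comm]
      show _ = ((X₁.legs i b).image (j₁ X₁ X₂ Y O₁ I₂)).image _
      rw [Finset.image_image, pushE.lift_comp_j₁]
    · rw [Sum.elim_inr, f₂.comm]
      show _ = ((X₂.legs i b).image (j₂ X₁ X₂ Y O₁ I₂)).image _
      rw [Finset.image_image, pushE.lift_comp_j₂]

lemma ι₁_pushDesc {Z : PN n} (f₁ : X₁ ⟶ Z) (f₂ : X₂ ⟶ Z) (h : f₁.α ∘ O₁ = f₂.α ∘ I₂) :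
    ι₁ X₁ X₂ Y O₁ I₂ ≫ pushDesc f₁ f₂ h = f₁ :=
  rfl

lemma ι₂_pushDesc {Z : PN n} (f₁ : X₁ ⟶ Z) (f₂ : X₂ ⟶ Z) (h : f₁.α ∘ O₁ = f₂.α ∘ I₂) :
    ι₂ X₁ X₂ Y O₁ I₂ ≫ pushDesc f₁ f₂ h = f₂ :=
  rfl

lemma pushPN_hom_ext {Z : PN n} {g g' : pushPN X₁ X₂ Y O₁ I₂ ⟶ Z}
    (h₁ : ι₁ X₁ X₂ Y O₁ I₂ ≫ g = ι₁ X₁ X₂ Y O₁ I₂ ≫ g')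
    (h₂ : ι₂ X₁ X₂ Y O₁ I₂ ≫ g = ι₂ X₁ X₂ Y O₁ I₂ ≫ g') : g = g' := by
  refine PNHom.ext (funext ?_) (funext ?_)
  · rintro ⟨e | e⟩
    · exact congrFun (congrArg PNHom.α h₁) e
    · exact congrFun (congrArg PNHom.α h₂) e
  · rintro (b | b)
    · exact congrFun (congrArg PNHom.β h₁) b
    · exact congrFun (congrArg PNHom.β h₂) b

variable (X₁ X₂ Y O₁ I₂)

/-- the square built from `O₁ : L(Y) → 𝓑₁`, `I₂ : L(Y) → 𝓑₂` and the
evident morphisms into the process network described above is a pushout square in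
`Process_n`. -/
theorem pushPN_isPushout :
    IsPushout (homL O₁) (homL I₂) (ι₁ X₁ X₂ Y O₁ I₂) (ι₂ X₁ X₂ Y O₁ I₂) := by
  refine ⟨⟨pushPN_condition X₁ X₂ Y O₁ I₂⟩, ⟨Limits.PushoutCocone.IsColimit.mk _
    (fun s => pushDesc s.inl s.inr (congrArg PNHom.α s.condition))
    (fun s => ι₁_pushDesc ..) (fun s => ι₂_pushDesc ..) fun s m h₁ h₂ => ?_⟩⟩
  exact pushPN_hom_ext (h₁.trans (ι₁_pushDesc ..).symm) (h₂.trans (ι₂_pushDesc ..).symm)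

end PushoutConstruction

end
end
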